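/- arXiv:1506.01311 — 4 statements merged into one kernel-verified Lean document; each statement's English description precedes it below -/
import Mathlib

section
/- Define ω: ℝⁿ × ℝⁿ → H² = Λ²ℝⁿ × Λ³ℝⁿ by ω(t₁,t₂) = (−t₁∧t₂, 0) and c_{(t,η)}(θ,ξ) = (θ, ξ + t∧θ). Then for all t₁,t₂,t₃ ∈ ℝⁿ the identity c_{(t₁,0)}(ω(t₂,t₃)) − ω(t₁+t₂, t₃) + ω(t₁, t₂+t₃) − ω(t₁,t₂) = (0, −t₁∧t₂∧t₃) holds in the abelian group H². -/
open ExteriorAlgebra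

noncomputable def wedge2 {n : ℕ} (x y : Fin n → ℝ) : ⋀[ℝ]^2 (Fin n → ℝ) :=
  ⟨ιMulti ℝ 2 ![x, y], ιMulti_range ℝ 2 (Set.mem_range_self _)⟩

noncomputable def wedge3 {n : ℕ} (x y z : Fin n → ℝ) : ⋀[ℝ]^3 (Fin n → ℝ) :=
  ⟨ιMulti ℝ 3 ![x, y, z], ιMulti_range ℝ 3 (Set.mem_range_self _)⟩

noncomputable def wedge12 {n : ℕ} (t : Fin n → ℝ) (θ : ⋀[ℝ]^2 (Fin n → ℝ)) :
    ⋀[ℝ]^3 (Fin n → ℝ) :=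
  ⟨ι ℝ t * (θ : ExteriorAlgebra ℝ (Fin n → ℝ)), by
    have h : (⋀[ℝ]^3 (Fin n → ℝ) : Submodule ℝ (ExteriorAlgebra ℝ (Fin n → ℝ)))
        = LinearMap.range (ι ℝ (M := Fin n → ℝ)) * ⋀[ℝ]^2 (Fin n → ℝ) := by
      show LinearMap.range (ι ℝ (M := Fin n → ℝ)) ^ (2 + 1) = _
      rw [pow_succ']
    rw [h]
    exact Submodule.mul_mem_mul (LinearMap.mem_range_self _ t) θ.2⟩

/-- The abelian group `H² = Λ²ℝⁿ × Λ³ℝⁿ` with componentwise addition. -/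
abbrev H2 (n : ℕ) := (⋀[ℝ]^2 (Fin n → ℝ)) × (⋀[ℝ]^3 (Fin n → ℝ))

/-- The action `c_{(t,0)}(θ,ξ) = (θ, ξ + t∧θ)` of an arrow `(t,0)` on `H²`. -/
noncomputable def c0 {n : ℕ} (t : Fin n → ℝ) (k : H2 n) : H2 n :=
  (k.1, k.2 + wedge12 t k.1)

/-- `ω(t₁,t₂) = (−t₁∧t₂, 0)`. -/
noncomputable def omegaF {n : ℕ} (t u : Fin n → ℝ) : H2 n := (-wedge2 t u, 0)

lemma wedge2_coe {n : ℕ} (x y : Fin n → ℝ) :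
    (wedge2 x y : ExteriorAlgebra ℝ (Fin n → ℝ)) = ι ℝ x * ι ℝ y := by
  show ιMulti ℝ 2 ![x, y] = _
  rw [ιMulti_apply]
  simp [List.ofFn_succ]

lemma wedge3_coe {n : ℕ} (x y z : Fin n → ℝ) :
    (wedge3 x y z : ExteriorAlgebra ℝ (Fin n → ℝ)) = ι ℝ x * ι ℝ y * ι ℝ z := by
  show ιMulti ℝ 3 ![x, y, z] = _
  rw [ιMulti_apply]
  simp [List.ofFn_succ, mul_assoc]

/-- `c_{(t₁,0)}(ω(t₂,t₃)) − ω(t₁+t₂,t₃) + ω(t₁,t₂+t₃) − ω(t₁,t₂) = (0, −t₁∧t₂∧t₃)` in `H²`. -/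
theorem stmt5 (n : ℕ) (t₁ t₂ t₃ : Fin n → ℝ) :
    c0 t₁ (omegaF t₂ t₃) - omegaF (t₁ + t₂) t₃ + omegaF t₁ (t₂ + t₃) - omegaF t₁ t₂
      = ((0 : ⋀[ℝ]^2 (Fin n → ℝ)), -wedge3 t₁ t₂ t₃) := by
  refine Prod.ext ?_ ?_
  · show -wedge2 t₂ t₃ - -wedge2 (t₁ + t₂) t₃ + -wedge2 t₁ (t₂ + t₃) - -wedge2 t₁ t₂ = 0
    apply Subtype.ext
    push_cast [wedge2_coe]
    simp only [map_add, add_mul, mul_add]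
    noncomm_ring
  · show (0 : ⋀[ℝ]^3 (Fin n → ℝ)) + wedge12 t₁ (-wedge2 t₂ t₃) - 0 + 0 - 0 = -wedge3 t₁ t₂ t₃
    apply Subtype.ext
    push_cast [wedge3_coe]
    show (0 : ExteriorAlgebra ℝ (Fin n → ℝ)) + ι ℝ t₁ * ((-wedge2 t₂ t₃ : ⋀[ℝ]^2 (Fin n → ℝ)) : ExteriorAlgebra ℝ (Fin n → ℝ)) - 0 + 0 - 0 = _
    push_cast [wedge2_coe]
    noncomm_ring
end

section
/- Let G be a group with a homomorphism ᾱ: ℝⁿ → Aut(G) and a homomorphism ū: Λ²ℝⁿ → G such that: (i) conjugation by ū(s∧t) equals ᾱ_s ᾱ_t ᾱ_{s+t}⁻¹ on G for all s,t; (ii) for all s,t,v,w ∈ ℝⁿ the element ᾱ_s(ū(t∧v))·ū(t∧v)⁻¹ is central in G and fixed by ᾱ_w; and (iii) ᾱ_s(ū(t∧v))·ū(t∧v)⁻¹ = ū(s∧v)·ᾱ_t(ū(s∧v))⁻¹ for all s,t,v. Then the map α: ℝⁿ × Λ²ℝⁿ → Aut(G), α(t,η) = Ad(ū(η)) ∘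 ᾱ_t, is a group homomorphism from the group H¹ = ℝⁿ × Λ²ℝⁿ with multiplication (t₁,η₁)·(t₂,η₂) = (t₁+t₂, η₁+η₂+t₁∧t₂). -/
/-!
Writing `Ad` for `MulAut.conj`, condition (i) says `Ad(ū(s∧t)) ᾱ_{s+t} = ᾱ_s ᾱ_t`, and
`ᾱ_s Ad(x) = Ad(ᾱ_s x) ᾱ_s`. Comparing both sides, the homomorphism property reduces to
`Ad(ᾱ_s(ū η)) = Ad(ū η)`. Both sides of this are additive in `η` and they agree on decomposable
`η = t∧v` by the centrality in (ii); decomposable 2-vectors generate `Λ²ℝⁿ` as an additive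
monoid, because a multiple of `t∧v` is again decomposable.
-/

open ExteriorAlgebra

namespace exteriorPower

variable {R M : Type*} [CommRing R] [AddCommGroup M] [Module R M]

theorem smul_ιMulti_mem_range {n : ℕ} (r : R) (v : Fin (n + 1) → M) :
    r • ιMulti R (n + 1) v ∈ Set.range (ιMulti R (n + 1)) :=
  ⟨Function.update v 0 (r • v 0), by
    rw [AlternatingMap.map_update_smul, Function.update_eq_self]⟩

-- Positive degree matters: in degree zero the range of `ιMulti` is `{1}`.
variable (R M) in
theorem addSubmonoidClosure_range_ιMulti (n : ℕ) :
    AddSubmonoid.closure (Set.range (ιMulti R (n + 1) : _ → ⋀[R]^(n + 1) M)) = ⊤ := by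
  refine (AddSubmonoid.eq_top_iff' _).2 fun η => ?_
  have hη : η ∈ Submodule.span R (Set.range (ιMulti R (n + 1))) := by
    rw [ιMulti_span]; trivial
  induction hη using Submodule.closure_induction with
  | zero => exact zero_mem _
  | add _ _ _ _ hx hy => exact add_mem hx hy
  | smul_mem r _ hx =>
    obtain ⟨v, rfl⟩ := hx
    exact AddSubmonoid.subset_closure (smul_ιMulti_mem_range r v)

end exteriorPower

theorem wedge2_induction {n : ℕ} {P : ⋀[ℝ]^2 (Fin n → ℝ) → Prop} (zero : P 0)
    (add : ∀ η₁ η₂, P η₁ → P η₂ → P (η₁ + η₂)) (wedge : ∀ s t, P (wedge2 s t))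
    (η : ⋀[ℝ]^2 (Fin n → ℝ)) : P η := by
  have hη : η ∈ AddSubmonoid.closure (Set.range (exteriorPower.ιMulti ℝ 2)) := by
    rw [exteriorPower.addSubmonoidClosure_range_ιMulti]; trivial
  induction hη using AddSubmonoid.closure_induction with
  | mem _ hx =>
    obtain ⟨v, rfl⟩ := hx
    rw [show v = ![v 0, v 1] from (FinVec.etaExpand_eq v).symm]
    exact wedge (v 0) (v 1)
  | zero => exact zero
  | add _ _ _ _ hx hy => exact add _ _ hx hy

section

variable {G : Type*} [Group G]

theorem MulAut.conj_eq_conj_of_forall_commute {x y : G} (h : ∀ z, x * y⁻¹ * z = z * (x * y⁻¹)) :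
    MulAut.conj x = MulAut.conj y := by
  ext z
  simp only [MulAut.conj_apply]
  calc x * z * x⁻¹ = (x * y⁻¹) * (y * z * y⁻¹) * (x * y⁻¹)⁻¹ := by group
    _ = y * z * y⁻¹ := by rw [h, mul_inv_cancel_right]

theorem MulAut.conj_map_mul_eq_mul_conj (φ : MulAut G) (x : G) :
    MulAut.conj (φ x) * φ = φ * MulAut.conj x := by
  ext z
  simp

theorem conj_map_eq_conj_of_wedge2 {n : ℕ} (φ : MulAut G) (u : ⋀[ℝ]^2 (Fin n → ℝ) → G)
    (hu : ∀ η₁ η₂, u (η₁ + η₂) = u η₁ * u η₂)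
    (hφ : ∀ t v (x : G), φ (u (wedge2 t v)) * (u (wedge2 t v))⁻¹ * x
      = x * (φ (u (wedge2 t v)) * (u (wedge2 t v))⁻¹))
    (η : ⋀[ℝ]^2 (Fin n → ℝ)) : MulAut.conj (φ (u η)) = MulAut.conj (u η) := by
  induction η using wedge2_induction with
  | zero =>
    have hu0 : u 0 = 1 := by simpa using hu 0 0
    simp [hu0]
  | add η₁ η₂ h₁ h₂ => simp only [hu, map_mul, h₁, h₂]
  | wedge t v => exact MulAut.conj_eq_conj_of_forall_commute (hφ t v)

end

theorem stmt9_general (n : ℕ) (G : Type*) [Group G]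
    (alpha : (Fin n → ℝ) → MulAut G)
    (u : ⋀[ℝ]^2 (Fin n → ℝ) → G)
    (hu : ∀ θ₁ θ₂, u (θ₁ + θ₂) = u θ₁ * u θ₂)
    (h1 : ∀ s t (x : G), u (wedge2 s t) * x * (u (wedge2 s t))⁻¹
        = alpha s (alpha t ((alpha (s + t))⁻¹ x)))
    (h2c : ∀ s t v (x : G),
        (alpha s (u (wedge2 t v)) * (u (wedge2 t v))⁻¹) * x
          = x * (alpha s (u (wedge2 t v)) * (u (wedge2 t v))⁻¹)) :
    ∀ g h : (Fin n → ℝ) × ⋀[ℝ]^2 (Fin n → ℝ),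
      MulAut.conj (u (g.2 + h.2 + wedge2 g.1 h.1)) * alpha (g.1 + h.1)
        = (MulAut.conj (u g.2) * alpha g.1) * (MulAut.conj (u h.2) * alpha h.1) := by
  rintro ⟨s, η₁⟩ ⟨t, η₂⟩
  have hcocycle : MulAut.conj (u (wedge2 s t)) * alpha (s + t) = alpha s * alpha t := by
    ext x
    simpa using h1 s t (alpha (s + t) x)
  have hconj := conj_map_eq_conj_of_wedge2 (alpha s) u hu (h2c s) η₂
  calc MulAut.conj (u (η₁ + η₂ + wedge2 s t)) * alpha (s + t)
      = MulAut.conj (u η₁) * MulAut.conj (u η₂)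
          * (MulAut.conj (u (wedge2 s t)) * alpha (s + t)) := by
        simp only [hu, map_mul, mul_assoc]
    _ = MulAut.conj (u η₁) * (MulAut.conj (alpha s (u η₂)) * alpha s) * alpha t := by
        rw [hcocycle, hconj]
        simp only [mul_assoc]
    _ = (MulAut.conj (u η₁) * alpha s) * (MulAut.conj (u η₂) * alpha t) := by
        rw [MulAut.conj_map_mul_eq_mul_conj]
        simp only [mul_assoc]

/-- Given `ᾱ : ℝⁿ → Aut(G)` and `ū : Λ²ℝⁿ → G` satisfying (i)–(iii), the map
`α(t,η) = Ad(ū(η)) ∘ ᾱ_t` is a group homomorphism from `H¹ = ℝⁿ × Λ²ℝⁿ` with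
multiplication `(t₁,η₁)·(t₂,η₂) = (t₁+t₂, η₁+η₂+t₁∧t₂)`. -/
theorem stmt9 (n : ℕ) (G : Type*) [Group G]
    (alpha : (Fin n → ℝ) → MulAut G)
    (halpha : ∀ s t, alpha (s + t) = alpha s * alpha t)
    (u : ⋀[ℝ]^2 (Fin n → ℝ) → G)
    (hu : ∀ θ₁ θ₂, u (θ₁ + θ₂) = u θ₁ * u θ₂)
    (h1 : ∀ s t (x : G), u (wedge2 s t) * x * (u (wedge2 s t))⁻¹
        = alpha s (alpha t ((alpha (s + t))⁻¹ x)))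
    (h2c : ∀ s t v (x : G),
        (alpha s (u (wedge2 t v)) * (u (wedge2 t v))⁻¹) * x
          = x * (alpha s (u (wedge2 t v)) * (u (wedge2 t v))⁻¹))
    (h2f : ∀ s t v w, alpha w (alpha s (u (wedge2 t v)) * (u (wedge2 t v))⁻¹)
        = alpha s (u (wedge2 t v)) * (u (wedge2 t v))⁻¹)
    (h3 : ∀ s t v, alpha s (u (wedge2 t v)) * (u (wedge2 t v))⁻¹
        = u (wedge2 s v) * (alpha t (u (wedge2 s v)))⁻¹) :
    ∀ g h : (Fin n → ℝ) × ⋀[ℝ]^2 (Fin n → ℝ),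
      MulAut.conj (u (g.2 + h.2 + wedge2 g.1 h.1)) * alpha (g.1 + h.1)
        = (MulAut.conj (u g.2) * alpha g.1) * (MulAut.conj (u h.2) * alpha h.1) :=
  stmt9_general n G alpha u hu h1 h2c
end

section
/- Let χ: Λ³ℝⁿ → 𝕋 be a group homomorphism (a tricharacter, evaluated on wedges of vectors). Define Φ: C_c(ℝⁿ × ℝⁿ, ℂ) → C_c(ℝⁿ × ℝⁿ, ℂ) by Φ(K)(x,y) = K(x+y, y), and define the products (K₁·K₂)(t,s) = ∫_{ℝⁿ} χ(t∧r∧s)·K₁(t,r)·K₂(r,s) dr and (f•g)(t,s) = ∫_{ℝⁿ} χ(r∧t∧s)·f(r, s+t−r)·g(t−r, s) dr. Then Φ(K₁·K₂) = Φ(K₁)•Φ(K₂) for all K₁, K₂ ∈ C_c(ℝⁿ × ℝⁿ, ℂ). -/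
open ExteriorAlgebra

open MeasureTheory

/-- `Φ(K)(x,y) = K(x+y, y)`. -/
noncomputable def Phi {n : ℕ} (K : (Fin n → ℝ) × (Fin n → ℝ) → ℂ) :
    (Fin n → ℝ) × (Fin n → ℝ) → ℂ :=
  fun p => K (p.1 + p.2, p.2)

/-- The `χ`-twisted convolution of kernels:
`(K₁·K₂)(t,s) = ∫ χ(t∧r∧s)·K₁(t,r)·K₂(r,s) dr`. -/
noncomputable def convK {n : ℕ} (χ : ⋀[ℝ]^3 (Fin n → ℝ) → ℂ)
    (K₁ K₂ : (Fin n → ℝ) × (Fin n → ℝ) → ℂ) : (Fin n → ℝ) × (Fin n → ℝ) → ℂ :=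
  fun p => ∫ r : Fin n → ℝ, χ (wedge3 p.1 r p.2) * K₁ (p.1, r) * K₂ (r, p.2)

/-- The Fell bundle convolution:
`(f•g)(t,s) = ∫ χ(r∧t∧s)·f(r, s+t−r)·g(t−r, s) dr`. -/
noncomputable def convF {n : ℕ} (χ : ⋀[ℝ]^3 (Fin n → ℝ) → ℂ)
    (f g : (Fin n → ℝ) × (Fin n → ℝ) → ℂ) : (Fin n → ℝ) × (Fin n → ℝ) → ℂ :=
  fun p => ∫ r : Fin n → ℝ, χ (wedge3 r p.1 p.2) * f (r, p.2 + p.1 - r) * g (p.1 - r, p.2)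

/- Both sides equal `f ![t, r, s]`: drop `s` from the first slot on the left; on the right
drop `t` and `s`, then swap the first two slots of `f ![-r, t, s]`. -/
theorem AlternatingMap.map_fin_three_add_sub {R M N : Type*} [CommRing R] [AddCommGroup M]
    [Module R M] [AddCommGroup N] [Module R N] (f : M [⋀^Fin 3]→ₗ[R] N) (t r s : M) :
    f ![t + s, r, s] = f ![t + s - r, t, s] := by
  have hswap : f ![r, t, s] = -f ![t, r, s] := by
    rw [← f.map_swap ![t, r, s] (i := 0) (j := 1) (by decide)]
    congr 1
    ext i; fin_cases i <;> rfl
  have hneg : f ![-r, t, s] = -f ![r, t, s] := by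
    simpa using f.map_vecCons_smul ![t, s] (-1 : R) r
  have hrep : ∀ x y : M, f ![x, y, x] = 0 ∧ f ![x, x, y] = 0 := fun x y =>
    ⟨f.map_eq_zero_of_eq _ (i := 0) (j := 2) rfl (by decide),
      f.map_eq_zero_of_eq _ (i := 0) (j := 1) rfl (by decide)⟩
  rw [add_sub_right_comm, sub_eq_add_neg t r]
  simp only [AlternatingMap.map_vecCons_add, (hrep _ _).1, (hrep _ _).2, hneg, hswap]
  simp

theorem wedge3_add_sub {n : ℕ} (t r s : Fin n → ℝ) :
    wedge3 (t + s) r s = wedge3 (t + s - r) t s :=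
  Subtype.ext ((ιMulti ℝ 3).map_fin_three_add_sub t r s)

theorem stmt15_general (n : ℕ) (χ : ⋀[ℝ]^3 (Fin n → ℝ) → ℂ)
    (K₁ K₂ : (Fin n → ℝ) × (Fin n → ℝ) → ℂ) :
    Phi (convK χ K₁ K₂) = convF χ (Phi K₁) (Phi K₂) := by
  ext ⟨t, s⟩
  simp only [Phi, convK, convF]
  rw [← integral_sub_left_eq_self _ volume (t + s)]
  congr 1 with r
  rw [wedge3_add_sub, sub_sub_cancel, add_sub_cancel, add_comm s t, sub_add_eq_add_sub]

/-- `Φ` intertwines the twisted convolution of kernels with the Fell bundle convolution: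
`Φ(K₁·K₂) = Φ(K₁)•Φ(K₂)`. -/
theorem stmt15 (n : ℕ) (χ : ⋀[ℝ]^3 (Fin n → ℝ) → ℂ)
    (hχ1 : ∀ ξ, ‖χ ξ‖ = 1)
    (hχm : ∀ ξ₁ ξ₂, χ (ξ₁ + ξ₂) = χ ξ₁ * χ ξ₂)
    (K₁ K₂ : (Fin n → ℝ) × (Fin n → ℝ) → ℂ)
    (h₁ : Continuous K₁) (h₁c : HasCompactSupport K₁)
    (h₂ : Continuous K₂) (h₂c : HasCompactSupport K₂) :
    Phi (convK χ K₁ K₂) = convF χ (Phi K₁) (Phi K₂) :=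
  stmt15_general n χ K₁ K₂
end

section
/- Let χ be an alternating ℝ-trilinear form on ℝⁿ such that the function ψ(t₁,t₂,t₃) = χ(t₁,t₂,t₃) is the coboundary ∂φ of some continuous function φ: ℝⁿ × ℝⁿ → ℝ with φ(t,0) = φ(0,t) = 0, i.e. χ(t₁,t₂,t₃) = φ(t₂,t₃) − φ(t₁+t₂,t₃) + φ(t₁,t₂+t₃) − φ(t₁,t₂) for all t₁,t₂,t₃. Then χ = 0. -/
/-- The normalized 3-cochain attached to an alternating trilinear form. -/
noncomputable def toCocycle {n : ℕ} (χ : AlternatingMap ℝ (Fin n → ℝ) ℝ (Fin 3))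
    (t₁ t₂ t₃ : Fin n → ℝ) : ℝ :=
  χ ![t₁, t₂, t₃]

/-- The group-cohomology coboundary of a 2-cochain (trivial coefficients). -/
def cobound {n : ℕ} (φ : (Fin n → ℝ) → (Fin n → ℝ) → ℝ) (t₁ t₂ t₃ : Fin n → ℝ) : ℝ :=
  φ t₂ t₃ - φ (t₁ + t₂) t₃ + φ t₁ (t₂ + t₃) - φ t₁ t₂

/-- Swapping the first two arguments changes the sign. -/
lemma swap01' {n : ℕ} (χ : AlternatingMap ℝ (Fin n → ℝ) ℝ (Fin 3))
    (a b c : Fin n → ℝ) : χ ![b, a, c] = - χ ![a, b, c] := by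
  have h := χ.map_swap ![a, b, c] (show (0 : Fin 3) ≠ 1 by decide)
  have hv : (![a, b, c] ∘ Equiv.swap (0 : Fin 3) 1) = ![b, a, c] := by
    funext i; fin_cases i <;> simp [Equiv.swap_apply_def] <;> rfl
  rw [hv] at h; exact h

/-- Swapping the last two arguments changes the sign. -/
lemma swap12' {n : ℕ} (χ : AlternatingMap ℝ (Fin n → ℝ) ℝ (Fin 3))
    (a b c : Fin n → ℝ) : χ ![a, c, b] = - χ ![a, b, c] := by
  have h := χ.map_swap ![a, b, c] (show (1 : Fin 3) ≠ 2 by decide)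
  have hv : (![a, b, c] ∘ Equiv.swap (1 : Fin 3) 2) = ![a, c, b] := by
    funext i; fin_cases i <;> simp [Equiv.swap_apply_def] <;> rfl
  rw [hv] at h; exact h

/-- Swapping the outer two arguments changes the sign. -/
lemma swap02' {n : ℕ} (χ : AlternatingMap ℝ (Fin n → ℝ) ℝ (Fin 3))
    (a b c : Fin n → ℝ) : χ ![c, b, a] = - χ ![a, b, c] := by
  have h := χ.map_swap ![a, b, c] (show (0 : Fin 3) ≠ 2 by decide)
  have hv : (![a, b, c] ∘ Equiv.swap (0 : Fin 3) 2) = ![c, b, a] := by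
    funext i; fin_cases i <;> simp [Equiv.swap_apply_def] <;> rfl
  rw [hv] at h; exact h

/-- An alternating trilinear form on `ℝⁿ` that is the coboundary of a continuous
normalized 2-cochain must vanish. -/
theorem stmt18 (n : ℕ) (χ : AlternatingMap ℝ (Fin n → ℝ) ℝ (Fin 3))
    (φ : (Fin n → ℝ) → (Fin n → ℝ) → ℝ)
    (hφcont : Continuous (fun p : (Fin n → ℝ) × (Fin n → ℝ) => φ p.1 p.2))
    (hφ0 : ∀ t, φ t 0 = 0) (hφ0' : ∀ t, φ 0 t = 0)
    (hcob : ∀ t₁ t₂ t₃, toCocycle χ t₁ t₂ t₃ = cobound φ t₁ t₂ t₃) :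
    χ = 0 := by
  ext v
  have hv : ![v 0, v 1, v 2] = v := by
    funext i; fin_cases i <;> rfl
  set a := v 0 with ha
  set b := v 1 with hb
  set c := v 2 with hc
  rw [← hv]
  show χ ![a, b, c] = (0 : AlternatingMap ℝ (Fin n → ℝ) ℝ (Fin 3)) ![a, b, c]
  rw [AlternatingMap.zero_apply]
  -- sign relations
  have s1 : χ ![b, a, c] = - χ ![a, b, c] := swap01' χ a b c
  have s2 : χ ![a, c, b] = - χ ![a, b, c] := swap12' χ a b c
  have s3 : χ ![c, b, a] = - χ ![a, b, c] := swap02' χ a b c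
  have s4 : χ ![b, c, a] = χ ![a, b, c] := by
    have := swap12' χ b a c
    rw [s1] at this
    simpa using this
  have s5 : χ ![c, a, b] = χ ![a, b, c] := by
    have := swap12' χ c b a
    rw [s3] at this
    simpa using this
  -- coboundary identities
  have c1 := hcob a b c
  have c2 := hcob b a c
  have c3 := hcob b c a
  have c4 := hcob c b a
  have c5 := hcob c a b
  have c6 := hcob a c b
  simp only [toCocycle, cobound] at c1 c2 c3 c4 c5 c6
  rw [add_comm b a] at c2
  rw [add_comm c a] at c3
  rw [add_comm c b, add_comm b a] at c4
  rw [add_comm c a] at c5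
  rw [add_comm c b] at c6
  rw [s1] at c2
  rw [s4] at c3
  rw [s3] at c4
  rw [s5] at c5
  rw [s2] at c6
  linarith [c1, c2, c3, c4, c5, c6]
end
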